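/- There exists a constant c ∈ ℕ such that for every SO₂ formula φ in prenex normal form, the size of the translated bit-vector formula φ^BV (measured with binary-encoded scalars, so that a variable of width m contributes 1 + L(m) where L(0) = 1 and L(m) = ⌊log₂ m⌋ + 1 for m > 0, and each scalar argument of an operation contributes its binary length) is at most c · |φ|^c, where |φ| is the number of symbols of φ. In particular, the size of φ^BV is polynomially bounded in the size of φ even though the bit-widths 2^{ar(f)} occurring in φ^BV are exponential in the arities. -/

import Mathlib

/-! The translation `φ ↦ φ^BV` of prenex second-order Boolean (SO₂) formulas
to quantified bit-vector formulas, and the statement that the size of `φ^BV`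
(with binary-encoded scalars) is polynomially bounded in the number of symbols
of `φ`. -/

/-- Quantifier-free SO₂ formulas (the matrix `ψ`). -/
inductive SO2QF (F : Type) (ar : F → ℕ) : Type
  | and : SO2QF F ar → SO2QF F ar → SO2QF F ar
  | not : SO2QF F ar → SO2QF F ar
  | app : (f : F) → (Fin (ar f) → SO2QF F ar) → SO2QF F ar

/-- Prenex SO₂ formulas: a quantifier prefix over a quantifier-free matrix. -/
inductive SO2Prenex (F : Type) (ar : F → ℕ) : Type
  | matrix : SO2QF F ar → SO2Prenex F ar
  | ex : F → SO2Prenex F ar → SO2Prenex F ar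
  | all : F → SO2Prenex F ar → SO2Prenex F ar

/-- Bit-vector terms over variables `v : V` of widths `w v`. -/
inductive BVTerm (V : Type) (w : V → ℕ) : ℕ → Type
  | var : (v : V) → BVTerm V w (w v)
  | band : {m : ℕ} → BVTerm V w m → BVTerm V w m → BVTerm V w m
  | bnot : {m : ℕ} → BVTerm V w m → BVTerm V w m
  | zero : (k : ℕ) → BVTerm V w k
  | append : {m k : ℕ} → BVTerm V w m → BVTerm V w k → BVTerm V w (m + k)
  | index : {m : ℕ} → BVTerm V w m → BVTerm V w m → BVTerm V w 1
  | cast : {m k : ℕ} → m = k → BVTerm V w m → BVTerm V w k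

/-- The chain `ρ_{n-1}^BV · ρ_{n-2}^BV · … · ρ_0^BV` of width-1 terms. -/
def chainBV {V : Type} {w : V → ℕ} :
    {n : ℕ} → (Fin n → BVTerm V w 1) → BVTerm V w n
  | 0, _ => .zero 0
  | n + 1, f =>
      .cast (Nat.add_comm 1 n)
        (.append (f ⟨n, n.lt_succ_self⟩) (chainBV (fun i => f i.castSucc)))

/-- The translation `ψ ↦ ψ^BV`: `(ρ₁ ∧ ρ₂)^BV = ρ₁^BV & ρ₂^BV`,
`(¬ρ)^BV = ~ρ^BV`, `f()^BV = x_f` for a proposition `f`, and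
`f(ρ_{n-1},…,ρ_0)^BV = x_f[0^{2^n−n} · ρ_{n-1}^BV · … · ρ_0^BV]` for a proper
function symbol `f` of arity `n`, where `x_f` has width `2^(ar f)`. -/
def transQF {F : Type} {ar : F → ℕ} :
    SO2QF F ar → BVTerm F (fun f => 2 ^ ar f) 1
  | .and ρ₁ ρ₂ => .band (transQF ρ₁) (transQF ρ₂)
  | .not ρ => .bnot (transQF ρ)
  | .app f args =>
      if h : ar f = 0 then
        .cast (by rw [h, pow_zero]) (.var f)
      else
        .index (.var f)
          (.cast (Nat.sub_add_cancel (Nat.le_of_lt (Nat.lt_two_pow_self (n := ar f))))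
            (.append (.zero (2 ^ ar f - ar f))
              (chainBV (fun i => transQF (args i)))))

/-- The length `L n` of the binary encoding of `n`:
`L 0 = 1` and `L n = ⌊log₂ n⌋ + 1` for `n > 0`. -/
def L (n : ℕ) : ℕ := Nat.log2 n + 1

/-- The size of a bit-vector term with binary-encoded scalars: a variable of
width `m` contributes `1 + L m`, the constant `0^[k]` contributes
`L 0 + L k`, and every operation contributes `1` plus the sizes of its
subterms; casts (mere width bookkeeping) are size-transparent. -/
def BVTerm.size {V : Type} {w : V → ℕ} : {m : ℕ} → BVTerm V w m → ℕ
  | _, .var v => 1 + L (w v)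
  | _, .band t₁ t₂ => 1 + t₁.size + t₂.size
  | _, .bnot t => 1 + t.size
  | _, .zero k => L 0 + L k
  | _, .append t₁ t₂ => 1 + t₁.size + t₂.size
  | _, .index t s => 1 + t.size + s.size
  | _, .cast _ t => t.size

/-- The size of the translated bit-vector formula
`φ^BV = Q̄^BV (ψ^BV = 1^{[1]})` with binary-encoded scalars: each bit-vector
quantifier `Q x_f` over width `2^(ar f)` contributes `1 + L (2^(ar f))`
(the size of the variable `x_f`), and the matrix contributes the size of the
equation `ψ^BV = 1^{[1]}`, i.e. `1 + |ψ^BV| + (L 1 + L 1)`. -/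
def bvSize {F : Type} {ar : F → ℕ} : SO2Prenex F ar → ℕ
  | .matrix ψ => 1 + (transQF ψ).size + (L 1 + L 1)
  | .ex f φ => (1 + L (2 ^ ar f)) + bvSize φ
  | .all f φ => (1 + L (2 ^ ar f)) + bvSize φ

/-- The number of symbols of a quantifier-free SO₂ formula; an application of
a function symbol of arity `n` is written with the symbol and its `n` argument
slots, contributing `1 + n` symbols plus the symbols of the arguments. -/
def SO2QF.symCount {F : Type} {ar : F → ℕ} : SO2QF F ar → ℕ
  | .and φ ψ => 1 + φ.symCount + ψ.symCount
  | .not φ => 1 + φ.symCount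
  | .app f args => 1 + ar f + ∑ i, (args i).symCount

/-- The number of symbols of a prenex SO₂ formula; a quantifier `Q f` binding
a function symbol of arity `ar f` contributes `1 + ar f` symbols. -/
def SO2Prenex.symCount {F : Type} {ar : F → ℕ} : SO2Prenex F ar → ℕ
  | .matrix ψ => ψ.symCount
  | .ex f φ => 1 + ar f + φ.symCount
  | .all f φ => 1 + ar f + φ.symCount

lemma L_mono {m n : ℕ} (h : m ≤ n) : L m ≤ L n := by
  simp only [L, Nat.log2_eq_log_two]
  exact Nat.add_le_add_right (Nat.log_mono_right h) 1

lemma L_two_pow (n : ℕ) : L (2 ^ n) = n + 1 := by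
  simp [L, Nat.log2_eq_log_two, Nat.log_pow]

lemma chainBV_size {V : Type} {w : V → ℕ} :
    ∀ {n : ℕ} (f : Fin n → BVTerm V w 1),
      (chainBV f).size = 2 + ∑ i, (1 + (f i).size)
  | 0, f => by simp [chainBV, BVTerm.size, L]
  | n + 1, f => by
      rw [chainBV]
      simp only [BVTerm.size, chainBV_size (fun i => f i.castSucc),
        Fin.sum_univ_castSucc, Fin.last]
      omega

lemma transQF_size_le {F : Type} {ar : F → ℕ} (ψ : SO2QF F ar) :
    (transQF ψ).size ≤ 8 * ψ.symCount := by
  induction ψ with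
  | and φ ψ ih1 ih2 =>
      simp only [transQF, BVTerm.size, SO2QF.symCount]; omega
  | not φ ih =>
      simp only [transQF, BVTerm.size, SO2QF.symCount]; omega
  | app f args ih =>
      rw [transQF]
      by_cases h : ar f = 0
      · have hL1 : L 1 = 1 := by simp [L, Nat.log2_eq_log_two]
        simp only [h, dite_true, BVTerm.size, SO2QF.symCount, pow_zero, hL1]
        omega
      · simp only [h, dite_false, BVTerm.size, chainBV_size, SO2QF.symCount, L_two_pow]
        have h1 : L (2 ^ ar f - ar f) ≤ ar f + 1 := by
          calc L (2 ^ ar f - ar f) ≤ L (2 ^ ar f) := L_mono (Nat.sub_le _ _)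
          _ = ar f + 1 := L_two_pow _
        have h2 : ∑ i, (1 + (transQF (args i)).size)
            ≤ ar f + 8 * ∑ i, (args i).symCount := by
          calc ∑ i, (1 + (transQF (args i)).size)
              ≤ ∑ i : Fin (ar f), (1 + 8 * (args i).symCount) :=
                Finset.sum_le_sum (fun i _ => by have := ih i; omega)
          _ = ar f + 8 * ∑ i, (args i).symCount := by
                rw [Finset.sum_add_distrib, ← Finset.mul_sum]
                simp
        have hL0 : L 0 = 1 := by simp [L, Nat.log2_eq_log_two]
        omega

lemma symCount_pos {F : Type} {ar : F → ℕ} (ψ : SO2QF F ar) : 1 ≤ ψ.symCount := by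
  cases ψ <;> simp only [SO2QF.symCount] <;> omega

lemma bvSize_le {F : Type} {ar : F → ℕ} (φ : SO2Prenex F ar) :
    bvSize φ ≤ 11 * φ.symCount := by
  induction φ with
  | matrix ψ =>
      have := transQF_size_le ψ
      have := symCount_pos ψ
      have hL1 : L 1 = 1 := by simp [L, Nat.log2_eq_log_two]
      simp only [bvSize, SO2Prenex.symCount, hL1]
      omega
  | ex f φ ih =>
      simp only [bvSize, SO2Prenex.symCount, L_two_pow]; omega
  | all f φ ih =>
      simp only [bvSize, SO2Prenex.symCount, L_two_pow]; omega

/-- There is a constant `c` such that for every prenex SO₂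
formula `φ`, the size of the translated bit-vector formula `φ^BV` (with
binary-encoded scalars) is at most `c · |φ|^c`, where `|φ|` is the number of
symbols of `φ`.  In particular `|φ^BV|` is polynomially bounded in `|φ|`,
even though the bit-widths `2^(ar f)` occurring in `φ^BV` are exponential in
the arities. -/
theorem transBV_size_polynomial :
    ∃ c : ℕ, ∀ (F : Type) (ar : F → ℕ) (φ : SO2Prenex F ar),
      bvSize φ ≤ c * φ.symCount ^ c := by
  refine ⟨11, fun F ar φ => ?_⟩
  calc bvSize φ ≤ 11 * φ.symCount := bvSize_le φ
  _ ≤ 11 * φ.symCount ^ 11 :=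
      Nat.mul_le_mul_left _ (Nat.le_self_pow (by norm_num) _)
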